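/- Variance bound for the empirical-vs-mean term: let X_{1/N}, …, X_{N/N} be independent 𝕏-valued random variables, g : 𝕏² → ℝ bounded by B_g, and A^N a matrix with Σ_{j=1}^N (A^N_{ij})² ≤ KN for every i. Then for each i, 𝔼| (1/N) Σ_{j=1}^N A^N_{ij} ( g(x, X_{j/N}) − 𝔼[g(x, X_{j/N})] ) |² ≤ 4 B_g² K / N for every fixed x ∈ 𝕏. -/

import Mathlib

/-!
Writing `Z = ∑ⱼ A i j * g x (X j)`, the summand is `Z - 𝔼 Z`, so the left-hand side is
`Var Z / N²`. Independence makes the variance additive, `Var Z = ∑ⱼ (A i j)² Var g(x, X j)`, and a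
variable bounded by `B` has variance at most `B²` (Popoviciu), so `Var Z ≤ B² K N`. This even gives
the bound with constant `1` in place of `4`.
-/

open MeasureTheory ProbabilityTheory

namespace ProbabilityTheory

variable {Ω ι : Type*} [MeasurableSpace Ω] {μ : Measure Ω}

lemma variance_le_sq_of_abs_le [IsProbabilityMeasure μ] {X : Ω → ℝ} {B : ℝ} (hX : AEMeasurable X μ)
    (hB : ∀ᵐ ω ∂μ, |X ω| ≤ B) : Var[X; μ] ≤ B ^ 2 := by
  have h := variance_le_sq_of_bounded (hB.mono fun ω hω => abs_le.mp hω) hX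
  rwa [sub_neg_eq_add, ← two_mul, mul_div_cancel_left₀ _ two_ne_zero] at h

lemma variance_sum_const_mul_le [IsProbabilityMeasure μ] {s : Finset ι} {Y : ι → Ω → ℝ} {B : ℝ} (a : ι → ℝ)
    (hY : ∀ i, AEMeasurable (Y i) μ) (hB : ∀ i, ∀ᵐ ω ∂μ, |Y i ω| ≤ B)
    (hindep : Set.Pairwise ↑s fun i j => Y i ⟂ᵢ[μ] Y j) :
    Var[fun ω => ∑ i ∈ s, a i * Y i ω; μ] ≤ B ^ 2 * ∑ i ∈ s, a i ^ 2 := by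
  have hL2 : ∀ i ∈ s, MemLp (fun ω => a i * Y i ω) 2 μ := fun i _ =>
    (memLp_of_bounded ((hB i).mono fun ω hω => abs_le.mp hω)
      (hY i).aestronglyMeasurable 2).const_mul (a i)
  have hindep' : Set.Pairwise ↑s fun i j =>
      (fun ω => a i * Y i ω) ⟂ᵢ[μ] (fun ω => a j * Y j ω) := fun i hi j hj hij =>
    (hindep hi hj hij).comp (measurable_const_mul (a i)) (measurable_const_mul (a j))
  calc Var[fun ω => ∑ i ∈ s, a i * Y i ω; μ]
      = ∑ i ∈ s, a i ^ 2 * Var[Y i; μ] := by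
        rw [← Finset.sum_fn, IndepFun.variance_sum hL2 hindep']
        exact Finset.sum_congr rfl fun i _ => variance_const_mul _ _ _
    _ ≤ ∑ i ∈ s, a i ^ 2 * B ^ 2 := by
        gcongr with i
        exact variance_le_sq_of_abs_le (hY i) (hB i)
    _ = B ^ 2 * ∑ i ∈ s, a i ^ 2 := by rw [Finset.mul_sum]; simp_rw [mul_comm]

lemma integral_sq_sum_const_mul_sub_integral {s : Finset ι} {Y : ι → Ω → ℝ} (a : ι → ℝ)
    (hY : ∀ i, Integrable (Y i) μ) :
    ∫ ω, (∑ i ∈ s, a i * (Y i ω - ∫ ω', Y i ω' ∂μ)) ^ 2 ∂μ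
      = Var[fun ω => ∑ i ∈ s, a i * Y i ω; μ] := by
  have hsum : Integrable (fun ω => ∑ i ∈ s, a i * Y i ω) μ :=
    integrable_finsetSum _ fun i _ => (hY i).const_mul (a i)
  rw [variance_eq_integral hsum.aemeasurable,
    integral_finsetSum _ fun i _ => (hY i).const_mul (a i)]
  simp_rw [integral_const_mul, mul_sub, Finset.sum_sub_distrib]

end ProbabilityTheory

theorem stmt_10_general {Ω S X' : Type*} [MeasurableSpace Ω] [MeasurableSpace S]
    (P : Measure Ω) [IsProbabilityMeasure P]
    (N : ℕ)
    (Xp : Fin N → Ω → S) (hmeas : ∀ j, Measurable (Xp j))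
    (hindep : ProbabilityTheory.iIndepFun Xp P)
    (g : X' → S → ℝ) (Bg : ℝ) (hg : ∀ x y, |g x y| ≤ Bg)
    (hgm : ∀ x, Measurable (g x))
    (A : Fin N → Fin N → ℝ) (K : ℝ)
    (hA : ∀ i, ∑ j : Fin N, (A i j) ^ 2 ≤ K * N) :
    ∀ (i : Fin N) (x : X'),
      (∫ ω, ((1 / (N:ℝ)) * ∑ j : Fin N,
          A i j * (g x (Xp j ω) - ∫ ω', g x (Xp j ω') ∂P)) ^ 2 ∂P)
        ≤ 4 * Bg ^ 2 * K / N := by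
  intro i x
  have hN : (0 : ℝ) < N := Nat.cast_pos.mpr i.pos
  have hK : 0 ≤ K := nonneg_of_mul_nonneg_left
    ((Finset.sum_nonneg fun j _ => sq_nonneg (A i j)).trans (hA i)) hN
  have hY : ∀ j, Measurable fun ω => g x (Xp j ω) := fun j => (hgm x).comp (hmeas j)
  have hYint : ∀ j, Integrable (fun ω => g x (Xp j ω)) P := fun j =>
    (integrable_const Bg).mono' (hY j).aestronglyMeasurable (.of_forall fun ω => hg x _)
  have hvar := variance_sum_const_mul_le (s := Finset.univ) (A i) (fun j => (hY j).aemeasurable)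
    (fun j => .of_forall fun ω => hg x (Xp j ω))
    (fun j _ k _ hjk => (hindep.indepFun hjk).comp (hgm x) (hgm x))
  calc (∫ ω, ((1 / (N:ℝ)) * ∑ j : Fin N,
          A i j * (g x (Xp j ω) - ∫ ω', g x (Xp j ω') ∂P)) ^ 2 ∂P)
      = (1 / (N:ℝ)) ^ 2 * Var[fun ω => ∑ j : Fin N, A i j * g x (Xp j ω); P] := by
        simp_rw [mul_pow, integral_const_mul, integral_sq_sum_const_mul_sub_integral _ hYint]
    _ ≤ (1 / (N:ℝ)) ^ 2 * (Bg ^ 2 * (K * N)) := by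
        gcongr
        exact hvar.trans (by gcongr; exact hA i)
    _ = Bg ^ 2 * K / N := by field_simp
    _ ≤ 4 * Bg ^ 2 * K / N := by gcongr; linarith [sq_nonneg Bg]

/-- variance bound for the empirical-vs-mean term. If X_{1/N},…,X_{N/N}
are independent, g is bounded by B_g, and Σ_j (A^N_{ij})² ≤ K·N for every i, then
𝔼| (1/N) Σ_j A_{ij} ( g(x, X_{j/N}) − 𝔼 g(x, X_{j/N}) ) |² ≤ 4 B_g² K / N. -/
theorem stmt_10 {Ω S X' : Type*} [MeasurableSpace Ω] [MeasurableSpace S]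
    (P : Measure Ω) [IsProbabilityMeasure P]
    (N : ℕ) (hN : 0 < N)
    (Xp : Fin N → Ω → S) (hmeas : ∀ j, Measurable (Xp j))
    (hindep : ProbabilityTheory.iIndepFun Xp P)
    (g : X' → S → ℝ) (Bg : ℝ) (hg : ∀ x y, |g x y| ≤ Bg)
    (hgm : ∀ x, Measurable (g x))
    (A : Fin N → Fin N → ℝ) (K : ℝ)
    (hA : ∀ i, ∑ j : Fin N, (A i j) ^ 2 ≤ K * N) :
    ∀ (i : Fin N) (x : X'),
      (∫ ω, ((1 / (N:ℝ)) * ∑ j : Fin N,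
          A i j * (g x (Xp j ω) - ∫ ω', g x (Xp j ω') ∂P)) ^ 2 ∂P)
        ≤ 4 * Bg ^ 2 * K / N :=
  stmt_10_general P N Xp hmeas hindep g Bg hg hgm A K hA
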